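/- For a real parameter m with 0 ≤ m < 1 and α with |α| ≤ 1, define R_m(α) = ∫₀¹ (1-t²)^{m/2} [∫₀^∞∫₀^∞ exp(-(r² + r'² - 2rr't α)/2) (rr')^m dr dr'] dt. Then R_m(α) ≤ 2√π · Γ(m + 1/2)/(1-m). -/

import Mathlib

open MeasureTheory Real

/-- The function `R_m(α)`. -/
noncomputable def Rfun (m α : ℝ) : ℝ :=
  ∫ t in Set.Ioo (0 : ℝ) 1,
    (1 - t ^ 2) ^ (m / 2) *
      ∫ r in Set.Ioi (0 : ℝ), ∫ r' in Set.Ioi (0 : ℝ),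
        Real.exp (-(r ^ 2 + r' ^ 2 - 2 * r * r' * t * α) / 2) * (r * r') ^ m

/-!
For `0 ≤ t < 1` the inner integrand is dominated by `φ ((r + r') / 2) ψ (r' - r)`, where
`φ x = x ^ (2m) e^{-(1-t) x²}` and `ψ w = e^{-(1+t) w² / 4}`: use `t α ≤ t`, AM-GM
`r r' ≤ ((r + r') / 2)²` and the identity
`r² + r'² - 2 r r' t = 2 (1 - t) ((r + r') / 2)² + (1 + t) (r' - r)² / 2`.
The substitution `(r, r') ↦ ((r + r') / 2, r' - r)` has Jacobian one, so the double integral is at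
most `∫₀^∞ φ · ∫_ℝ ψ = Γ(m + 1/2) (1 - t)^{-(m + 1/2)} √(π / (1 + t))`. After multiplying by
`(1 - t²)^{m/2}` and dropping the factor `(1 + t)^{(m-1)/2} ≤ 1`, what remains is
`√π Γ(m + 1/2) (1 - t)^{-(m+1)/2}`, whose integral over `(0, 1)` is `2 √π Γ(m + 1/2) / (1 - m)`.
-/

open Set
open scoped ENNReal

section GeneralMeasure

variable {X Y : Type*} [MeasurableSpace X] [MeasurableSpace Y] {μ : Measure X} {ν : Measure Y}

theorem ofReal_integral_le_lintegral_ofReal (f : X → ℝ) :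
    ENNReal.ofReal (∫ x, f x ∂μ) ≤ ∫⁻ x, ENNReal.ofReal (f x) ∂μ := by
  refine ENNReal.ofReal_le_of_le_toReal ?_
  by_cases hf : Integrable f μ
  · rw [integral_eq_lintegral_pos_part_sub_lintegral_neg_part hf]
    exact sub_le_self _ ENNReal.toReal_nonneg
  · rw [integral_undef hf]
    exact ENNReal.toReal_nonneg

theorem integral_integral_le_of_lintegral_lintegral_le {f : X → Y → ℝ} {C : ℝ} (hC : 0 ≤ C)
    (h : ∫⁻ x, ∫⁻ y, ENNReal.ofReal (f x y) ∂ν ∂μ ≤ ENNReal.ofReal C) :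
    ∫ x, ∫ y, f x y ∂ν ∂μ ≤ C := by
  refine (ENNReal.ofReal_le_ofReal_iff hC).1 ((ofReal_integral_le_lintegral_ofReal _).trans ?_)
  exact (lintegral_mono fun x => ofReal_integral_le_lintegral_ofReal _).trans h

theorem integral_le_integral_of_ae_le_of_nonneg {f g : X → ℝ} (hfg : f ≤ᵐ[μ] g)
    (hg₀ : 0 ≤ᵐ[μ] g) (hg : Integrable g μ) : ∫ x, f x ∂μ ≤ ∫ x, g x ∂μ := by
  by_cases hf : Integrable f μ
  · exact integral_mono_ae hf hg hfg
  · rw [integral_undef hf]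
    exact integral_nonneg_of_ae hg₀

end GeneralMeasure

theorem lintegral_lintegral_mul_midpoint_sub {f g : ℝ → ℝ≥0∞} (hf : Measurable f)
    (hg : Measurable g) :
    ∫⁻ r, ∫⁻ r', f ((r + r') / 2) * g (r' - r) = (∫⁻ x, f x) * ∫⁻ w, g w := by
  calc ∫⁻ r, ∫⁻ r', f ((r + r') / 2) * g (r' - r)
      = ∫⁻ r, ∫⁻ w, f (r + w / 2) * g w := by
        refine lintegral_congr fun r => ?_
        rw [← lintegral_add_left_eq_self _ r]
        refine lintegral_congr fun w => ?_
        rw [show (r + (r + w)) / 2 = r + w / 2 by ring, add_sub_cancel_left]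
    _ = ∫⁻ w, ∫⁻ r, f (r + w / 2) * g w := lintegral_lintegral_swap (by fun_prop)
    _ = ∫⁻ w, (∫⁻ x, f x) * g w := by
        refine lintegral_congr fun w => ?_
        rw [lintegral_mul_const _ (by fun_prop), lintegral_add_right_eq_self f (w / 2)]
    _ = (∫⁻ x, f x) * ∫⁻ w, g w := lintegral_const_mul _ hg

theorem integral_Ioi_rpow_mul_exp_neg_mul_sq {q b : ℝ} (hq : -1 < q) (hb : 0 < b) :
    ∫ x in Ioi (0 : ℝ), x ^ q * exp (-b * x ^ 2) =
      b ^ (-(q + 1) / 2) * Gamma ((q + 1) / 2) / 2 := by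
  have h := integral_rpow_mul_exp_neg_mul_rpow two_pos hq hb
  simp only [rpow_two] at h
  rw [h]; ring

theorem integrableOn_Ioo_one_sub_rpow {p : ℝ} (hp : -1 < p) :
    IntegrableOn (fun t : ℝ => (1 - t) ^ p) (Ioo 0 1) := by
  have h := (intervalIntegral.intervalIntegrable_rpow' hp).comp_sub_left 1 (a := 0) (b := 1)
  rw [sub_zero, sub_self] at h
  exact ((intervalIntegrable_iff_integrableOn_Ioc_of_le zero_le_one).1 h.symm).mono_set
    Ioo_subset_Ioc_self

theorem integral_Ioo_one_sub_rpow {p : ℝ} (hp : -1 < p) :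
    ∫ t in Ioo (0 : ℝ) 1, (1 - t) ^ p = 1 / (p + 1) := by
  rw [← integral_Ioc_eq_integral_Ioo, ← intervalIntegral.integral_of_le zero_le_one,
    intervalIntegral.integral_comp_sub_left (fun x => x ^ p), sub_zero, sub_self,
    integral_rpow (Or.inl hp), Real.one_rpow, Real.zero_rpow (by linarith), sub_zero]

theorem exp_mul_rpow_le_midpoint {m t α r r' : ℝ} (hm : 0 ≤ m) (ht : 0 ≤ t) (hα : |α| ≤ 1)
    (hr : 0 ≤ r) (hr' : 0 ≤ r') :
    exp (-(r ^ 2 + r' ^ 2 - 2 * r * r' * t * α) / 2) * (r * r') ^ m ≤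
      ((r + r') / 2) ^ (2 * m) * exp (-(1 - t) * ((r + r') / 2) ^ 2) *
        exp (-((1 + t) / 4) * (r' - r) ^ 2) := by
  have hexp : exp (-(r ^ 2 + r' ^ 2 - 2 * r * r' * t * α) / 2) ≤
      exp (-(1 - t) * ((r + r') / 2) ^ 2) * exp (-((1 + t) / 4) * (r' - r) ^ 2) := by
    rw [← exp_add, exp_le_exp]
    have htα : r * r' * (t * α) ≤ r * r' * t :=
      mul_le_mul_of_nonneg_left (by nlinarith [abs_le.1 hα]) (mul_nonneg hr hr')
    nlinarith
  have hamgm : (r * r') ^ m ≤ ((r + r') / 2) ^ (2 * m) := by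
    rw [rpow_mul (by linarith) 2 m, rpow_two]
    exact rpow_le_rpow (mul_nonneg hr hr') (by nlinarith [sq_nonneg (r - r')]) hm
  calc exp (-(r ^ 2 + r' ^ 2 - 2 * r * r' * t * α) / 2) * (r * r') ^ m
      ≤ (exp (-(1 - t) * ((r + r') / 2) ^ 2) * exp (-((1 + t) / 4) * (r' - r) ^ 2)) *
          ((r + r') / 2) ^ (2 * m) :=
        mul_le_mul hexp hamgm (by positivity) (by positivity)
    _ = _ := by ring

theorem integral_integral_exp_mul_rpow_le {m t α : ℝ} (hm : 0 ≤ m) (hα : |α| ≤ 1) (ht₀ : 0 ≤ t)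
    (ht₁ : t < 1) :
    ∫ r in Ioi (0 : ℝ), ∫ r' in Ioi (0 : ℝ),
        exp (-(r ^ 2 + r' ^ 2 - 2 * r * r' * t * α) / 2) * (r * r') ^ m ≤
      (∫ x in Ioi (0 : ℝ), x ^ (2 * m) * exp (-(1 - t) * x ^ 2)) *
        ∫ w, exp (-((1 + t) / 4) * w ^ 2) := by
  set φ : ℝ → ℝ := fun x => x ^ (2 * m) * exp (-(1 - t) * x ^ 2)
  set ψ : ℝ → ℝ := fun w => exp (-((1 + t) / 4) * w ^ 2)
  have hφ : IntegrableOn φ (Ioi 0) :=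
    integrableOn_rpow_mul_exp_neg_mul_sq (by linarith) (by linarith)
  have hφ₀ : ∀ x ∈ Ioi (0 : ℝ), 0 ≤ φ x := fun x hx => by have := hx.out.le; positivity
  have hψ : Integrable ψ := integrable_exp_neg_mul_sq (by linarith)
  have hψ₀ : ∀ w, 0 ≤ ψ w := fun w => (exp_pos _).le
  set F : ℝ → ℝ≥0∞ := (Ioi 0).indicator fun x => ENNReal.ofReal (φ x)
  have hF : Measurable F := by fun_prop (disch := exact measurableSet_Ioi)
  refine integral_integral_le_of_lintegral_lintegral_le
    (mul_nonneg (setIntegral_nonneg measurableSet_Ioi hφ₀) (integral_nonneg hψ₀)) ?_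
  calc ∫⁻ r in Ioi 0, ∫⁻ r' in Ioi 0,
        ENNReal.ofReal (exp (-(r ^ 2 + r' ^ 2 - 2 * r * r' * t * α) / 2) * (r * r') ^ m)
      ≤ ∫⁻ r in Ioi 0, ∫⁻ r' in Ioi 0, F ((r + r') / 2) * ENNReal.ofReal (ψ (r' - r)) := by
        refine setLIntegral_mono' measurableSet_Ioi fun r hr => ?_
        refine setLIntegral_mono' measurableSet_Ioi fun r' hr' => ?_
        have hmid : (r + r') / 2 ∈ Ioi (0 : ℝ) := mem_Ioi.2 (half_pos (add_pos hr hr'))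
        rw [show F ((r + r') / 2) = ENNReal.ofReal (φ ((r + r') / 2)) from indicator_of_mem hmid _,
          ← ENNReal.ofReal_mul (hφ₀ _ hmid)]
        exact ENNReal.ofReal_le_ofReal
          (exp_mul_rpow_le_midpoint hm ht₀ hα (le_of_lt hr) (le_of_lt hr'))
    _ ≤ ∫⁻ r, ∫⁻ r', F ((r + r') / 2) * ENNReal.ofReal (ψ (r' - r)) :=
        (setLIntegral_le_lintegral _ _).trans
          (lintegral_mono fun r => setLIntegral_le_lintegral _ _)
    _ = (∫⁻ x, F x) * ∫⁻ w, ENNReal.ofReal (ψ w) :=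
        lintegral_lintegral_mul_midpoint_sub (g := fun w => ENNReal.ofReal (ψ w)) hF (by fun_prop)
    _ = ENNReal.ofReal ((∫ x in Ioi 0, φ x) * ∫ w, ψ w) := by
        rw [lintegral_indicator measurableSet_Ioi,
          ← ofReal_integral_eq_lintegral_ofReal hφ ((ae_restrict_mem measurableSet_Ioi).mono hφ₀),
          ← ofReal_integral_eq_lintegral_ofReal hψ (ae_of_all _ hψ₀),
          ENNReal.ofReal_mul (setIntegral_nonneg measurableSet_Ioi hφ₀)]

theorem one_sub_sq_rpow_mul_integral_integral_le {m t α : ℝ} (hm₀ : 0 ≤ m) (hm₁ : m ≤ 1)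
    (hα : |α| ≤ 1) (ht₀ : 0 ≤ t) (ht₁ : t < 1) :
    (1 - t ^ 2) ^ (m / 2) * ∫ r in Ioi (0 : ℝ), ∫ r' in Ioi (0 : ℝ),
        exp (-(r ^ 2 + r' ^ 2 - 2 * r * r' * t * α) / 2) * (r * r') ^ m ≤
      √π * Gamma (m + 1 / 2) * (1 - t) ^ (-((m + 1) / 2)) := by
  have h := integral_integral_exp_mul_rpow_le hm₀ hα ht₀ ht₁
  rw [integral_Ioi_rpow_mul_exp_neg_mul_sq (by linarith) (by linarith), integral_gaussian] at h
  have hsplit : (1 - t ^ 2) ^ (m / 2) = (1 - t) ^ (m / 2) * (1 + t) ^ (m / 2) := by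
    rw [← mul_rpow (by linarith) (by linarith), show (1 - t) * (1 + t) = 1 - t ^ 2 by ring]
  calc (1 - t ^ 2) ^ (m / 2) * ∫ r in Ioi (0 : ℝ), ∫ r' in Ioi (0 : ℝ),
        exp (-(r ^ 2 + r' ^ 2 - 2 * r * r' * t * α) / 2) * (r * r') ^ m
      ≤ (1 - t ^ 2) ^ (m / 2) * ((1 - t) ^ (-(2 * m + 1) / 2) * Gamma ((2 * m + 1) / 2) / 2 *
          √(π / ((1 + t) / 4))) :=
        mul_le_mul_of_nonneg_left h (rpow_nonneg (by nlinarith) _)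
    _ = √π * Gamma (m + 1 / 2) * (1 - t) ^ (-((m + 1) / 2)) * (1 + t) ^ ((m - 1) / 2) := by
        have hsqrt : √(π / ((1 + t) / 4)) = 2 * √π * (1 + t) ^ (-(1 / 2 : ℝ)) := by
          rw [sqrt_div pi_nonneg, sqrt_div (by linarith), rpow_neg (by linarith), ← sqrt_eq_rpow,
            show (4 : ℝ) = 2 ^ 2 by norm_num, sqrt_sq zero_le_two]
          field_simp
        rw [hsplit, hsqrt, show (2 * m + 1) / 2 = m + 1 / 2 by ring,
          show -((m + 1) / 2) = m / 2 + -(2 * m + 1) / 2 by ring,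
          show (m - 1) / 2 = m / 2 + -(1 / 2 : ℝ) by ring,
          rpow_add (by linarith : 0 < 1 - t), rpow_add (by linarith : 0 < 1 + t)]
        ring
    _ ≤ √π * Gamma (m + 1 / 2) * (1 - t) ^ (-((m + 1) / 2)) :=
        mul_le_of_le_one_right (by positivity)
          (rpow_le_one_of_one_le_of_nonpos (by linarith) (by linarith))

/-- For `0 ≤ m < 1` and `|α| ≤ 1`, `R_m(α) ≤ 2√π Γ(m+1/2)/(1-m)`. -/
theorem statement5 (m : ℝ) (hm0 : 0 ≤ m) (hm1 : m < 1) (α : ℝ) (hα : |α| ≤ 1) :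
    Rfun m α ≤ 2 * Real.sqrt π * Real.Gamma (m + 1 / 2) / (1 - m) := by
  have hp : -1 < -((m + 1) / 2) := by linarith
  calc Rfun m α
      ≤ ∫ t in Ioo (0 : ℝ) 1, √π * Gamma (m + 1 / 2) * (1 - t) ^ (-((m + 1) / 2)) := by
        refine integral_le_integral_of_ae_le_of_nonneg ?_ ?_
          ((integrableOn_Ioo_one_sub_rpow hp).const_mul _)
        all_goals filter_upwards [ae_restrict_mem measurableSet_Ioo] with t ht
        · exact one_sub_sq_rpow_mul_integral_integral_le hm0 hm1.le hα ht.1.le ht.2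
        · have : 0 < 1 - t := by linarith [ht.2]
          positivity
    _ = 2 * √π * Gamma (m + 1 / 2) / (1 - m) := by
        rw [integral_const_mul, integral_Ioo_one_sub_rpow hp]
        field_simp
        ring
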